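/- arXiv:2208.14813 — 2 statements merged into one kernel-verified Lean document; each statement's English description precedes it below -/
import Mathlib

section
/- Let φ : ℝ² × ℝ × ℝ → ℝ, written φ(r, z, t), be differentiable, let ζ : ℝ² × ℝ → ℝ be differentiable, let g ∈ ℝ, and write φ̂(r, t) := φ(r, ζ(r, t), t). Suppose that for all (r, t): (i) the Bernoulli equation holds on the free surface, (∂_t φ)(r, ζ(r,t), t) + ½ |(∇φ)(r, ζ(r,t), t)|² + g ζ(r,t) = 0; and (ii) the kinematic boundary condition holds, ∂_t ζ(r,t) = (∂_z φ)(r, ζ(r,t), t) − (∇_r φ)(r, ζ(r,t), t) · ∇_r ζ(r,t). Then for all (r, t): ∂_t φ̂ + ½ |(∇_r φ)^|² − ½ ((∂_z φ)^)² + (∂_z φ)^ ( (∇_r φ)^ · ∇_r ζ ) + g ζ = 0, where all hatted quantities are evaluated at (r, ζ(r,t), t). (Deterministic part of the stochastic classical water wave momentum equation, recovering Zakharov's surface equation.) -/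
/-!
By the chain rule, the time derivative of the trace `φ̂ (r, t) = φ (r, ζ (r, t), t)` is
`(∂_t φ)^ + (∂_z φ)^ ∂_t ζ`. Eliminating `(∂_t φ)^` with the Bernoulli equation and `∂_t ζ`
with the kinematic condition leaves an algebraic identity in the surface values of the
derivatives of `φ`.
-/

abbrev E2 : Type := EuclideanSpace ℝ (Fin 2)

/-- Horizontal gradient `∇_r φ` of a time-dependent scalar field on `ℝ² × ℝ × ℝ`. -/
noncomputable def gradr (φ : E2 × ℝ × ℝ → ℝ) (r : E2) (z t : ℝ) : E2 :=
  gradient (fun r' : E2 => φ (r', z, t)) r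

/-- Vertical partial derivative `∂_z φ` of a time-dependent scalar field. -/
noncomputable def dz (φ : E2 × ℝ × ℝ → ℝ) (r : E2) (z t : ℝ) : ℝ :=
  deriv (fun z' : ℝ => φ (r, z', t)) z

/-- Time partial derivative `∂_t φ` of a time-dependent scalar field. -/
noncomputable def dt (φ : E2 × ℝ × ℝ → ℝ) (r : E2) (z t : ℝ) : ℝ :=
  deriv (fun t' : ℝ => φ (r, z, t')) t

section PartialDerivatives

variable {E F : Type*} [NormedAddCommGroup E] [NormedSpace ℝ E]
  [NormedAddCommGroup F] [NormedSpace ℝ F]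
  {φ : E × ℝ × ℝ → F} {L : E × ℝ × ℝ →L[ℝ] F} {r : E} {z t : ℝ}

theorem HasFDerivAt.hasDerivAt_vertical (hφ : HasFDerivAt φ L (r, z, t)) :
    HasDerivAt (fun z' : ℝ => φ (r, z', t)) (L (0, 1, 0)) z :=
  hφ.comp_hasDerivAt z <|
    (hasDerivAt_const z r).prodMk ((hasDerivAt_id z).prodMk (hasDerivAt_const z t))

theorem HasFDerivAt.hasDerivAt_temporal (hφ : HasFDerivAt φ L (r, z, t)) :
    HasDerivAt (fun t' : ℝ => φ (r, z, t')) (L (0, 0, 1)) t :=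
  hφ.comp_hasDerivAt t <|
    (hasDerivAt_const t r).prodMk ((hasDerivAt_const t z).prodMk (hasDerivAt_id t))

theorem HasFDerivAt.hasDerivAt_trace {h : ℝ → ℝ} {h' : ℝ} (hφ : HasFDerivAt φ L (r, h t, t))
    (hh : HasDerivAt h h' t) :
    HasDerivAt (fun t' : ℝ => φ (r, h t', t')) (h' • L (0, 1, 0) + L (0, 0, 1)) t := by
  have hcurve : HasDerivAt (fun t' : ℝ => (r, h t', t')) ((0, h', 1) : E × ℝ × ℝ) t :=
    (hasDerivAt_const t r).prodMk (hh.prodMk (hasDerivAt_id t))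
  have hdir : ((0, h', 1) : E × ℝ × ℝ) = h' • (0, 1, 0) + (0, 0, 1) := by simp
  have hcomp := hφ.comp_hasDerivAt t hcurve
  rw [hdir, map_add, map_smul] at hcomp
  exact hcomp

end PartialDerivatives

theorem deriv_trace_eq {φ : E2 × ℝ × ℝ → ℝ} {h : ℝ → ℝ} {r : E2} {t : ℝ}
    (hφ : DifferentiableAt ℝ φ (r, h t, t)) (hh : DifferentiableAt ℝ h t) :
    deriv (fun t' : ℝ => φ (r, h t', t')) t = dt φ r (h t) t + dz φ r (h t) t * deriv h t := by
  have hL := hφ.hasFDerivAt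
  rw [dt, dz, hL.hasDerivAt_temporal.deriv, hL.hasDerivAt_vertical.deriv,
    (hL.hasDerivAt_trace hh.hasDerivAt).deriv, smul_eq_mul]
  ring

theorem zakharov_surface_momentum_equation
    (φ : E2 × ℝ × ℝ → ℝ) (ζ : E2 × ℝ → ℝ) (g : ℝ)
    (hφ : Differentiable ℝ φ) (hζ : Differentiable ℝ ζ)
    (bernoulli : ∀ (r : E2) (t : ℝ),
      dt φ r (ζ (r, t)) t
        + (1 / 2) * (‖gradr φ r (ζ (r, t)) t‖ ^ 2 + (dz φ r (ζ (r, t)) t) ^ 2)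
        + g * ζ (r, t) = 0)
    (kinematic : ∀ (r : E2) (t : ℝ),
      deriv (fun t' : ℝ => ζ (r, t')) t
        = dz φ r (ζ (r, t)) t
          - (inner ℝ (gradr φ r (ζ (r, t)) t)
              (gradient (fun r' : E2 => ζ (r', t)) r) : ℝ)) :
    ∀ (r : E2) (t : ℝ),
      deriv (fun t' : ℝ => φ (r, ζ (r, t'), t')) t
        + (1 / 2) * ‖gradr φ r (ζ (r, t)) t‖ ^ 2
        - (1 / 2) * (dz φ r (ζ (r, t)) t) ^ 2
        + dz φ r (ζ (r, t)) t
            * (inner ℝ (gradr φ r (ζ (r, t)) t)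
                (gradient (fun r' : E2 => ζ (r', t)) r) : ℝ)
        + g * ζ (r, t) = 0 := by
  intro r t
  have hsurface : DifferentiableAt ℝ (fun t' : ℝ => ζ (r, t')) t :=
    (hζ _).comp t ((differentiableAt_const r).prodMk differentiableAt_id)
  have chain := deriv_trace_eq (hφ (r, ζ (r, t), t)) hsurface
  linear_combination chain + bernoulli r t + dz φ r (ζ (r, t)) t * kinematic r t
end

section
/- Let φ : ℝ² × ℝ × ℝ → ℝ, written φ(r, z, t), be differentiable, let ζ : ℝ² × ℝ → ℝ be differentiable, let g ∈ ℝ, write φ̂(r, t) := φ(r, ζ(r,t), t), and define G(r, t) := − ∇_r ζ(r,t) · (∇_r φ)(r, ζ(r,t), t) + (∂_z φ)(r, ζ(r,t), t). Suppose that for all (r, t): (i) (∂_t φ)(r, ζ(r,t), t) + ½ |(∇φ)(r, ζ(r,t), t)|² + g ζ(r,t) = 0; and (ii) ∂_t ζ(r,t) = (∂_z φ)(r, ζ(r,t), t) − (∇_r φ)(r, ζ(r,t), t) · ∇_r ζ(r,t). Then for all (r, t): ∂_t φ̂ + g ζ + ½ |∇_r φ̂|² − ( G + ∇_r ζ ·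 ∇_r φ̂ )² / ( 2 (1 + |∇_r ζ|²) ) = 0. (Deterministic part of the stochastic Craig–Sulem form of the water wave equations, with G the Dirichlet-to-Neumann expression G(ζ)φ̂.) -/
/-!
With `v = (∇_r φ)^`, `w = (∂_z φ)^` and `a = ∇_r ζ`, the chain rule gives `∇_r φ̂ = v + w a` and
`∂_t φ̂ = w ∂_t ζ + (∂_t φ)^`. Hence `G + a · ∇_r φ̂ = w (1 + |a|²)`, so the quotient is
`½ w² (1 + |a|²)`; substituting the kinematic condition for `∂_t ζ`, the left-hand side reduces
to the Bernoulli expression `(∂_t φ)^ + ½ (|v|² + w²) + g ζ`.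
-/

open scoped RealInnerProductSpace

section PartialDerivatives

variable {φ : E2 × ℝ × ℝ → ℝ} {r : E2} {z t : ℝ}

lemma inner_gradr_eq_fderiv (hφ : DifferentiableAt ℝ φ (r, z, t)) (u : E2) :
    ⟪gradr φ r z t, u⟫ = fderiv ℝ φ (r, z, t) (u, 0, 0) := by
  have h : HasFDerivAt (fun r' : E2 => φ (r', z, t))
      ((fderiv ℝ φ (r, z, t)).comp ((ContinuousLinearMap.id ℝ E2).prod 0)) r :=
    hφ.hasFDerivAt.comp r ((hasFDerivAt_id r).prodMk (hasFDerivAt_const (z, t) r))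
  rw [gradr, inner_gradient_left, h.fderiv]
  rfl

lemma dz_eq_fderiv (hφ : DifferentiableAt ℝ φ (r, z, t)) :
    dz φ r z t = fderiv ℝ φ (r, z, t) (0, 1, 0) :=
  (hφ.hasFDerivAt.comp_hasDerivAt z
    ((hasDerivAt_const z r).prodMk ((hasDerivAt_id z).prodMk (hasDerivAt_const z t)))).deriv

lemma dt_eq_fderiv (hφ : DifferentiableAt ℝ φ (r, z, t)) :
    dt φ r z t = fderiv ℝ φ (r, z, t) (0, 0, 1) :=
  (hφ.hasFDerivAt.comp_hasDerivAt t
    ((hasDerivAt_const t r).prodMk ((hasDerivAt_const t z).prodMk (hasDerivAt_id t)))).deriv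

lemma deriv_comp_graph {h : ℝ → ℝ} (hφ : DifferentiableAt ℝ φ (r, h t, t))
    (hh : DifferentiableAt ℝ h t) :
    deriv (fun t' => φ (r, h t', t')) t = deriv h t * dz φ r (h t) t + dt φ r (h t) t := by
  have hcomp : HasDerivAt (fun t' => φ (r, h t', t'))
      (fderiv ℝ φ (r, h t, t) (0, deriv h t, 1)) t :=
    hφ.hasFDerivAt.comp_hasDerivAt t
      ((hasDerivAt_const t r).prodMk (hh.hasDerivAt.prodMk (hasDerivAt_id t)))
  have hsplit : ((0 : E2), deriv h t, (1 : ℝ))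
      = deriv h t • ((0 : E2), (1 : ℝ), (0 : ℝ)) + ((0 : E2), (0 : ℝ), (1 : ℝ)) := by
    simp
  rw [hcomp.deriv, hsplit, map_add, map_smul, dz_eq_fderiv hφ, dt_eq_fderiv hφ, smul_eq_mul]

lemma gradient_comp_graph {f : E2 → ℝ} (hφ : DifferentiableAt ℝ φ (r, f r, t))
    (hf : DifferentiableAt ℝ f r) :
    gradient (fun r' => φ (r', f r', t)) r
      = gradr φ r (f r) t + dz φ r (f r) t • gradient f r := by
  set L := (ContinuousLinearMap.id ℝ E2).prod ((fderiv ℝ f r).prod (0 : E2 →L[ℝ] ℝ))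
  have hcomp : HasFDerivAt (fun r' => φ (r', f r', t)) ((fderiv ℝ φ (r, f r, t)).comp L) r :=
    hφ.hasFDerivAt.comp r
      ((hasFDerivAt_id r).prodMk (hf.hasFDerivAt.prodMk (hasFDerivAt_const t r)))
  refine ext_inner_right ℝ fun u => ?_
  have hsplit :
      L u = ((u, 0, 0) : E2 × ℝ × ℝ) + fderiv ℝ f r u • ((0 : E2), (1 : ℝ), (0 : ℝ)) := by
    simp [L]
  rw [inner_gradient_left, hcomp.fderiv, ContinuousLinearMap.comp_apply, hsplit, map_add,
    map_smul, inner_add_left, real_inner_smul_left, inner_gradr_eq_fderiv hφ,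
    ← dz_eq_fderiv hφ, inner_gradient_left, smul_eq_mul, mul_comm]

end PartialDerivatives

lemma surface_energy_identity {F : Type*} [NormedAddCommGroup F] [InnerProductSpace ℝ F]
    (a v : F) (w d c : ℝ) :
    (w - ⟪v, a⟫) * w + d + c + (1 / 2) * ‖v + w • a‖ ^ 2
      - (-⟪a, v⟫ + w + ⟪a, v + w • a⟫) ^ 2 / (2 * (1 + ‖a‖ ^ 2))
      = d + (1 / 2) * (‖v‖ ^ 2 + w ^ 2) + c := by
  have hnormal : -⟪a, v⟫ + w + ⟪a, v + w • a⟫ = w * (1 + ‖a‖ ^ 2) := by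
    rw [inner_add_right, real_inner_smul_right, real_inner_self_eq_norm_sq]
    ring
  have hsq : ‖v + w • a‖ ^ 2 = ‖v‖ ^ 2 + 2 * w * ⟪v, a⟫ + w ^ 2 * ‖a‖ ^ 2 := by
    rw [norm_add_sq_real, real_inner_smul_right, norm_smul, mul_pow, Real.norm_eq_abs, sq_abs]
    ring
  have hpos : (1 : ℝ) + ‖a‖ ^ 2 ≠ 0 := by positivity
  rw [hnormal, hsq]
  field_simp
  ring

theorem craig_sulem_surface_momentum_equation
    (φ : E2 × ℝ × ℝ → ℝ) (ζ : E2 × ℝ → ℝ) (g : ℝ)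
    (hφ : Differentiable ℝ φ) (hζ : Differentiable ℝ ζ)
    (G : E2 → ℝ → ℝ)
    (hG : ∀ (r : E2) (t : ℝ),
      G r t = -(inner ℝ (gradient (fun r' : E2 => ζ (r', t)) r)
                  (gradr φ r (ζ (r, t)) t) : ℝ)
              + dz φ r (ζ (r, t)) t)
    (bernoulli : ∀ (r : E2) (t : ℝ),
      dt φ r (ζ (r, t)) t
        + (1 / 2) * (‖gradr φ r (ζ (r, t)) t‖ ^ 2 + (dz φ r (ζ (r, t)) t) ^ 2)
        + g * ζ (r, t) = 0)
    (kinematic : ∀ (r : E2) (t : ℝ),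
      deriv (fun t' : ℝ => ζ (r, t')) t
        = dz φ r (ζ (r, t)) t
          - (inner ℝ (gradr φ r (ζ (r, t)) t)
              (gradient (fun r' : E2 => ζ (r', t)) r) : ℝ)) :
    ∀ (r : E2) (t : ℝ),
      deriv (fun t' : ℝ => φ (r, ζ (r, t'), t')) t
        + g * ζ (r, t)
        + (1 / 2) * ‖gradient (fun r' : E2 => φ (r', ζ (r', t), t)) r‖ ^ 2
        - (G r t
            + (inner ℝ (gradient (fun r' : E2 => ζ (r', t)) r)
                (gradient (fun r' : E2 => φ (r', ζ (r', t), t)) r) : ℝ)) ^ 2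
          / (2 * (1 + ‖gradient (fun r' : E2 => ζ (r', t)) r‖ ^ 2)) = 0 := by
  intro r t
  rw [deriv_comp_graph (hφ _) (by fun_prop), gradient_comp_graph (hφ _) (by fun_prop),
    kinematic, hG, surface_energy_identity]
  exact bernoulli r t
end
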